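/- arXiv:2102.11167 — 2 statements merged into one kernel-verified Lean document; each statement's English description precedes it below -/
import Mathlib

section
/- For every positive integer m and every u ∈ L²(0,1), the norm ‖Iₓᵐ u‖_{L²(0,1)}² is at most (1/2)^m · ‖u‖_{L²(0,1)}², where Iₓᵐ u(x) = ∫₀ˣ ((x−ξ)^{m−1}/(m−1)!) · u(ξ) dξ. -/
/-! By Cauchy–Schwarz against the kernel `(x - ξ)^(m-1)/(m-1)!`, the square of `Iᵐu(x)` is at
most `x^(2m-1) / ((2m-1) ((m-1)!)²) · ‖u‖²`. Integrating over `(0,1)` gives the constant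
`1 / (2m (2m-1) ((m-1)!)²)`, which is at most `2⁻ᵐ` because `2^(m-1) ≤ m!`. -/

open MeasureTheory intervalIntegral

/-- The `m`-fold iterated integral (Riemann–Liouville integral of integer order `m`). -/
noncomputable def iterIntegral (m : ℕ) (u : ℝ → ℝ) (x : ℝ) : ℝ :=
  ∫ ξ in (0:ℝ)..x, ((x - ξ) ^ (m - 1) / (Nat.factorial (m - 1))) * u ξ

open Set Nat

theorem sq_integral_mul_le {α : Type*} [MeasurableSpace α] {μ : Measure α} {f g : α → ℝ}
    (hf : MemLp f 2 μ) (hg : MemLp g 2 μ) :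
    (∫ a, f a * g a ∂μ) ^ 2 ≤ (∫ a, f a ^ 2 ∂μ) * ∫ a, g a ^ 2 ∂μ := by
  have norm_rpow_two (h : α → ℝ) :
      ∫ a, ‖h a‖ ^ (2 : ℝ) ∂μ = ∫ a, h a ^ 2 ∂μ := by
    simp only [Real.rpow_two, Real.norm_eq_abs, sq_abs]
  have holder := integral_mul_norm_le_Lp_mul_Lq (μ := μ) Real.HolderConjugate.two_two
    (by simpa using hf) (by simpa using hg)
  rw [norm_rpow_two, norm_rpow_two, ← Real.sqrt_eq_rpow, ← Real.sqrt_eq_rpow] at holder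
  have hA : 0 ≤ ∫ a, f a ^ 2 ∂μ := integral_nonneg fun a => sq_nonneg _
  have hB : 0 ≤ ∫ a, g a ^ 2 ∂μ := integral_nonneg fun a => sq_nonneg _
  calc (∫ a, f a * g a ∂μ) ^ 2 = ‖∫ a, f a * g a ∂μ‖ ^ 2 := (sq_abs _).symm
    _ ≤ (√(∫ a, f a ^ 2 ∂μ) * √(∫ a, g a ^ 2 ∂μ)) ^ 2 := by
      gcongr
      refine (MeasureTheory.norm_integral_le_integral_norm _).trans ?_
      simpa only [norm_mul] using holder
    _ = _ := by rw [mul_pow, Real.sq_sqrt hA, Real.sq_sqrt hB]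

theorem integral_sq_sub_pow_div_factorial (n : ℕ) (x : ℝ) :
    ∫ ξ in (0:ℝ)..x, ((x - ξ) ^ n / n !) ^ 2 =
      x ^ (2 * n + 1) / ((2 * n + 1) * (n ! : ℝ) ^ 2) := by
  simp_rw [div_pow, ← pow_mul, mul_comm n 2]
  rw [intervalIntegral.integral_div, intervalIntegral.integral_comp_sub_left (fun t => t ^ (2 * n)),
    sub_self, sub_zero, integral_pow]
  push_cast
  rw [zero_pow (by omega), sub_zero, div_div]

theorem sq_iterIntegral_succ_le (n : ℕ) (u : ℝ → ℝ) {x : ℝ} (hx : 0 ≤ x)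
    (hu : MemLp u 2 (volume.restrict (Ioc 0 x))) :
    iterIntegral (n + 1) u x ^ 2 ≤
      x ^ (2 * n + 1) / ((2 * n + 1) * (n ! : ℝ) ^ 2) * ∫ ξ in (0:ℝ)..x, u ξ ^ 2 := by
  have hK : Continuous fun ξ : ℝ => (x - ξ) ^ n / (n ! : ℝ) := by fun_prop
  have hK2 : MemLp (fun ξ : ℝ => (x - ξ) ^ n / (n ! : ℝ)) 2 (volume.restrict (Ioc 0 x)) :=
    (memLp_two_iff_integrable_sq hK.aestronglyMeasurable).2 (hK.pow 2).integrableOn_Ioc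
  rw [← integral_sq_sub_pow_div_factorial, iterIntegral, Nat.add_sub_cancel,
    integral_of_le hx, integral_of_le hx, integral_of_le hx]
  exact sq_integral_mul_le hK2 hu

theorem sq_iterIntegral_succ_le_of_le (n : ℕ) (u : ℝ → ℝ) {x b : ℝ} (hx : x ∈ Icc 0 b)
    (hu : MemLp u 2 (volume.restrict (Ioc 0 b))) :
    iterIntegral (n + 1) u x ^ 2 ≤
      x ^ (2 * n + 1) / ((2 * n + 1) * (n ! : ℝ) ^ 2) * ∫ ξ in (0:ℝ)..b, u ξ ^ 2 := by
  have hu_x : MemLp u 2 (volume.restrict (Ioc 0 x)) :=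
    hu.mono_measure (Measure.restrict_mono (Ioc_subset_Ioc_right hx.2) le_rfl)
  refine (sq_iterIntegral_succ_le n u hx.1 hu_x).trans ?_
  refine mul_le_mul_of_nonneg_left ?_ (div_nonneg (pow_nonneg hx.1 _) (by positivity))
  refine integral_mono_interval le_rfl hx.1 hx.2 (ae_of_all _ fun x => sq_nonneg _) ?_
  exact (intervalIntegrable_iff_integrableOn_Ioc_of_le (hx.1.trans hx.2)).2
    ((memLp_two_iff_integrable_sq hu.1).1 hu)

theorem two_pow_succ_le_mul_factorial_sq (n : ℕ) :
    2 ^ (n + 1) ≤ (2 * n + 2) * (2 * n + 1) * (n !) ^ 2 := by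
  have h : 2 ^ n ≤ (n + 1)! := by
    simpa [add_comm] using factorial_mul_pow_le_factorial (m := 1) (n := n)
  calc 2 ^ (n + 1) ≤ 2 * (n + 1)! := by rw [pow_succ']; omega
    _ = (2 * n + 2) * n ! * 1 := by rw [factorial_succ]; ring
    _ ≤ (2 * n + 2) * n ! * ((2 * n + 1) * n !) :=
      Nat.mul_le_mul_left _ (Nat.one_le_iff_ne_zero.2 (by positivity))
    _ = _ := by ring

theorem norm_iterIntegral_le (m : ℕ) (hm : 0 < m) (u : ℝ → ℝ)
    (hu : MemLp u 2 (volume.restrict (Set.Ioo (0:ℝ) 1))) :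
    (∫ x in (0:ℝ)..1, (iterIntegral m u x) ^ 2) ≤
      (1 / 2) ^ m * ∫ x in (0:ℝ)..1, (u x) ^ 2 := by
  obtain ⟨n, rfl⟩ := Nat.exists_eq_add_one_of_ne_zero hm.ne'
  set c : ℝ := (2 * n + 1) * (n ! : ℝ) ^ 2
  set C := ∫ x in (0:ℝ)..1, u x ^ 2
  replace hu : MemLp u 2 (volume.restrict (Ioc 0 1)) := by
    rwa [← Measure.restrict_congr_set Ioo_ae_eq_Ioc]
  have hC : 0 ≤ C := integral_nonneg zero_le_one fun x _ => sq_nonneg _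
  calc ∫ x in (0:ℝ)..1, iterIntegral (n + 1) u x ^ 2
      ≤ ∫ x in (0:ℝ)..1, x ^ (2 * n + 1) / c * C := by
        rw [integral_of_le zero_le_one, integral_of_le zero_le_one]
        refine integral_mono_of_nonneg (ae_of_all _ fun x => sq_nonneg _) ?_
          ((ae_restrict_iff' measurableSet_Ioc).2 (ae_of_all _ fun x hx =>
            sq_iterIntegral_succ_le_of_le n u (Ioc_subset_Icc_self hx) hu))
        exact (by fun_prop : Continuous fun x : ℝ => x ^ (2 * n + 1) / c * C).integrableOn_Ioc
    _ = 1 / (2 * n + 2) / c * C := by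
        rw [intervalIntegral.integral_mul_const, intervalIntegral.integral_div, integral_pow]
        push_cast
        ring
    _ ≤ (1 / 2) ^ (n + 1) * C := by
        gcongr
        rw [div_div, one_div_pow, one_div_le_one_div (by positivity) (by positivity), ← mul_assoc]
        exact_mod_cast two_pow_succ_le_mul_factorial_sq n
end

section
/- For 1 < α < 2, d_j = (j+1)^{2−α} − j^{2−α}, and σ_m = d_{m−1} − 2d_m + d_{m+1}, one has 0 < σ_m < 1 for all m ≥ 1. -/
/-!
Put `p = 2 - α ∈ (0, 1)` and `f = Δ_[1] (y ↦ y ^ p)`, so that `d j = f j` and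
`σ m = f (m - 1) - 2 f m + f (m + 1)`. Differences commute with derivatives, so
`f' = p • Δ_[1] (y ↦ y ^ (p - 1))` on `(0, ∞)`, and this is negative and strictly increasing since
`y ↦ y ^ (p - 1)` is decreasing with decreasing derivative. Hence `f` is positive, strictly
decreasing and strictly convex on `[0, ∞)`, with `f 0 = 1`. Convexity gives `σ m > 0`, and
monotonicity gives `σ m < f (m - 1) - f m < f (m - 1) ≤ f 0 = 1`.
-/

open Real Set fwdDiff

lemma HasDerivAt.fwdDiff {g g' : ℝ → ℝ} {h x : ℝ} (hx : HasDerivAt g (g' x) x)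
    (hxh : HasDerivAt g (g' (x + h)) (x + h)) : HasDerivAt (Δ_[h] g) (Δ_[h] g' x) x :=
  (hxh.comp_add_const x h).sub hx

lemma StrictConvexOn.fwdDiff_lt_fwdDiff_add {s : Set ℝ} {f : ℝ → ℝ} (hf : StrictConvexOn ℝ s f)
    {h x : ℝ} (hh : 0 < h) (hx : x ∈ s) (hxh : x + h + h ∈ s) :
    Δ_[h] f x < Δ_[h] f (x + h) := by
  have := hf.slope_strict_mono_adjacent hx hxh (lt_add_of_pos_right x hh)
    (lt_add_of_pos_right _ hh)
  simp only [add_sub_cancel_left] at this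
  exact (div_lt_div_iff_of_pos_right hh).1 this

lemma hasDerivAt_fwdDiff_rpow (q : ℝ) {x : ℝ} (hx : 0 < x) :
    HasDerivAt (Δ_[1] fun y : ℝ => y ^ q) (q * Δ_[1] (fun y : ℝ => y ^ (q - 1)) x) x := by
  have hder {y : ℝ} (hy : 0 < y) : HasDerivAt (fun y : ℝ => y ^ q) (q * y ^ (q - 1)) y :=
    hasDerivAt_rpow_const (Or.inl hy.ne')
  simpa only [fwdDiff, mul_sub] using
    HasDerivAt.fwdDiff (g' := fun y => q * y ^ (q - 1)) (hder hx) (hder (by positivity))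

lemma fwdDiff_rpow_pos {q x : ℝ} (hq : 0 < q) (hx : 0 ≤ x) : 0 < Δ_[1] (fun y : ℝ => y ^ q) x :=
  sub_pos.2 (rpow_lt_rpow hx (lt_add_one x) hq)

lemma fwdDiff_rpow_neg {q x : ℝ} (hq : q < 0) (hx : 0 < x) : Δ_[1] (fun y : ℝ => y ^ q) x < 0 :=
  sub_neg.2 (rpow_lt_rpow_of_neg hx (lt_add_one x) hq)

lemma continuous_fwdDiff_rpow {q : ℝ} (hq : 0 ≤ q) : Continuous (Δ_[1] fun y : ℝ => y ^ q) :=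
  ((continuous_rpow_const hq).comp (continuous_add_const 1)).sub (continuous_rpow_const hq)

lemma strictAntiOn_fwdDiff_rpow {p : ℝ} (hp₀ : 0 < p) (hp₁ : p < 1) :
    StrictAntiOn (Δ_[1] fun y : ℝ => y ^ p) (Ici 0) := by
  refine strictAntiOn_of_hasDerivWithinAt_neg (convex_Ici 0)
    (continuous_fwdDiff_rpow hp₀.le).continuousOn
    (fun x hx => (hasDerivAt_fwdDiff_rpow p ?_).hasDerivWithinAt) fun x hx => ?_
  all_goals rw [interior_Ici] at hx
  · exact hx
  · exact mul_neg_of_pos_of_neg hp₀ (fwdDiff_rpow_neg (by linarith) hx)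

lemma strictMonoOn_fwdDiff_rpow {q : ℝ} (hq : q < 0) :
    StrictMonoOn (Δ_[1] fun y : ℝ => y ^ q) (Ioi 0) := by
  refine strictMonoOn_of_hasDerivWithinAt_pos (convex_Ioi 0)
    (fun x hx => (hasDerivAt_fwdDiff_rpow q hx).continuousAt.continuousWithinAt)
    (fun x hx => (hasDerivAt_fwdDiff_rpow q ?_).hasDerivWithinAt) fun x hx => ?_
  all_goals rw [interior_Ioi] at hx
  · exact hx
  · exact mul_pos_of_neg_of_neg hq (fwdDiff_rpow_neg (by linarith) hx)

lemma strictConvexOn_fwdDiff_rpow {p : ℝ} (hp₀ : 0 < p) (hp₁ : p < 1) :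
    StrictConvexOn ℝ (Ici 0) (Δ_[1] fun y : ℝ => y ^ p) := by
  refine StrictMonoOn.strictConvexOn_of_deriv (convex_Ici 0)
    (continuous_fwdDiff_rpow hp₀.le).continuousOn ?_
  rw [interior_Ici]
  have hderiv : EqOn (fun x => p * Δ_[1] (fun y : ℝ => y ^ (p - 1)) x)
      (deriv (Δ_[1] fun y : ℝ => y ^ p)) (Ioi 0) := fun x hx =>
    (hasDerivAt_fwdDiff_rpow p hx).deriv.symm
  have hmono := strictMonoOn_fwdDiff_rpow (q := p - 1) (by linarith)
  exact StrictMonoOn.congr (fun x hx y hy hxy => mul_lt_mul_of_pos_left (hmono hx hy hxy) hp₀)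
    hderiv

theorem sigma_pos_lt_one (α : ℝ) (hα : 1 < α ∧ α < 2)
    (d : ℕ → ℝ) (hd : ∀ j : ℕ, d j = ((j : ℝ) + 1) ^ (2 - α) - (j : ℝ) ^ (2 - α))
    (σ : ℕ → ℝ) (hσ : ∀ m : ℕ, 1 ≤ m → σ m = d (m - 1) - 2 * d m + d (m + 1)) :
    ∀ m : ℕ, 1 ≤ m → 0 < σ m ∧ σ m < 1 := by
  obtain ⟨hα₁, hα₂⟩ := hα
  have hp₀ : 0 < 2 - α := by linarith
  have hp₁ : 2 - α < 1 := by linarith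
  set f := Δ_[1] fun y : ℝ => y ^ (2 - α)
  have hdf (j : ℕ) : d j = f j := hd j
  intro m hm
  obtain ⟨n, rfl⟩ := Nat.exists_eq_add_of_le' hm
  have hσf : σ (n + 1) = f n - 2 * f (n + 1) + f (n + 1 + 1) := by
    rw [hσ _ hm, hdf, hdf, hdf]; push_cast; rfl
  have hn : (0 : ℝ) ≤ n := n.cast_nonneg
  have hconvex : f (n + 1) - f n < f (n + 1 + 1) - f (n + 1) :=
    (strictConvexOn_fwdDiff_rpow hp₀ hp₁).fwdDiff_lt_fwdDiff_add one_pos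
      (mem_Ici.2 hn) (mem_Ici.2 (by linarith))
  have hanti := strictAntiOn_fwdDiff_rpow hp₀ hp₁
  have hf_succ : f (n + 1 + 1) < f (n + 1) :=
    hanti (mem_Ici.2 (by linarith)) (mem_Ici.2 (by linarith)) (lt_add_one _)
  have hf_le : f n ≤ 1 := by
    have hf₀ : f 0 = 1 := by simp [f, fwdDiff, zero_rpow hp₀.ne']
    exact hf₀ ▸ hanti.antitoneOn self_mem_Ici (mem_Ici.2 hn) hn
  have hf_pos : 0 < f (n + 1) := fwdDiff_rpow_pos hp₀ (by linarith)
  constructor <;> linarith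
end
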